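/- arXiv:1510.05877 — 8 statements merged into one kernel-verified Lean document; each statement's English description precedes it below -/
import Mathlib

section
/- Let S = conv{a_1,...,a_{n+1}} be an n-simplex in R^n with faces S^i = conv{a_1,...,a_{i-1},a_{i+1},...,a_{n+1}}. If A^1,...,A^{n+1} are closed convex subsets of S with S^i ⊆ A^i for each i, then there exist a point v ∈ S and ε₀ ≥ 0 such that dist(v, A^i) = ε₀ for every i. -/
/-!
Minimize `v ↦ maxᵢ dist(v, Aⁱ)` over the compact simplex `S`, attained at `v₀` with value `ε₀`.
If some `dist(v₀, A^{i₀}) < ε₀`, push `v₀` slightly towards the vertex `a_{i₀}`: this vertex lies in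
every `Aⁱ` with `i ≠ i₀`, so by convexity of `dist(·, Aⁱ)` those distances drop below `ε₀`, while by
continuity `dist(·, A^{i₀})` stays below `ε₀`. This contradicts minimality, so all distances equal `ε₀`.
-/

open Metric Set Filter Topology

theorem Convex.convexOn_infDist {E : Type*} [SeminormedAddCommGroup E] [NormedSpace ℝ E]
    {A : Set E} (hA : Convex ℝ A) : ConvexOn ℝ univ (infDist · A) := by
  refine ⟨convex_univ, fun x _ y _ s t hs ht hst => ?_⟩
  rcases A.eq_empty_or_nonempty with rfl | hne
  · simp
  refine le_of_forall_pos_le_add fun δ hδ => ?_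
  obtain ⟨p, hpA, hp⟩ := (infDist_lt_iff hne).1 (lt_add_of_pos_right (infDist x A) hδ)
  obtain ⟨q, hqA, hq⟩ := (infDist_lt_iff hne).1 (lt_add_of_pos_right (infDist y A) hδ)
  calc infDist (s • x + t • y) A
      ≤ dist (s • x + t • y) (s • p + t • q) := infDist_le_dist_of_mem (hA hpA hqA hs ht hst)
    _ ≤ s * dist x p + t * dist y q := by
        grw [dist_add_add_le, dist_smul₀, dist_smul₀, Real.norm_of_nonneg hs,
          Real.norm_of_nonneg ht]
    _ ≤ s * (infDist x A + δ) + t * (infDist y A + δ) := by gcongr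
    _ = s • infDist x A + t • infDist y A + δ := by
        simp only [smul_eq_mul]; linear_combination δ * hst

section Equalization

variable {ι E : Type*} [AddCommGroup E] [Module ℝ E] [TopologicalSpace E]
  [IsTopologicalAddGroup E] [ContinuousSMul ℝ E] {K : Set E} {f : ι → E → ℝ}

theorem exists_mem_forall_lt_of_convexOn (hK : Convex ℝ K) (hcont : ∀ i, ContinuousOn (f i) K)
    (hconv : ∀ i, ConvexOn ℝ K (f i)) {c : ℝ} (hc : 0 < c) {v₀ p : E} (hv₀ : v₀ ∈ K)
    (hp : p ∈ K) {i₀ : ι} (hi₀ : f i₀ v₀ < c) (hle : ∀ i, f i v₀ ≤ c)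
    (hp_le : ∀ i ≠ i₀, f i p ≤ 0) : ∃ v ∈ K, ∀ i, f i v < c := by
  let seg : ℝ → E := fun t => (1 - t) • v₀ + t • p
  have hseg_mem : ∀ t ∈ Ioc (0 : ℝ) 1, seg t ∈ K := fun t ht =>
    hK hv₀ hp (sub_nonneg.2 ht.2) ht.1.le (sub_add_cancel 1 t)
  have hseg : Tendsto seg (𝓝[>] 0) (𝓝[K] v₀) := by
    refine tendsto_nhdsWithin_iff.2 ⟨?_, mem_of_superset (Ioc_mem_nhdsGT one_pos) hseg_mem⟩
    exact ((by fun_prop : Continuous seg).tendsto' 0 v₀ (by simp [seg])).mono_left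
      nhdsWithin_le_nhds
  obtain ⟨t, ht_lt, ht⟩ :=
    ((hseg.eventually ((hcont i₀ v₀ hv₀).eventually (gt_mem_nhds hi₀))).and
      (Ioc_mem_nhdsGT one_pos)).exists
  refine ⟨seg t, hseg_mem t ht, fun i => ?_⟩
  rcases eq_or_ne i i₀ with rfl | hi
  · exact ht_lt
  have h1t : 0 ≤ 1 - t := sub_nonneg.2 ht.2
  calc f i (seg t) ≤ (1 - t) • f i v₀ + t • f i p :=
        (hconv i).2 hv₀ hp h1t ht.1.le (sub_add_cancel 1 t)
    _ ≤ (1 - t) * c + t * 0 := by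
        simp only [smul_eq_mul]
        gcongr
        exacts [hle i, ht.1.le, hp_le i hi]
    _ < c := by nlinarith [ht.1]

theorem IsCompact.exists_mem_forall_eq_of_convexOn [Fintype ι] [Nonempty ι] (hK : IsCompact K)
    (hKconv : Convex ℝ K) (hKne : K.Nonempty) (hcont : ∀ i, ContinuousOn (f i) K)
    (hconv : ∀ i, ConvexOn ℝ K (f i)) (hnonneg : ∀ i, ∀ x ∈ K, 0 ≤ f i x)
    (hvertex : ∀ i, ∃ p ∈ K, ∀ j ≠ i, f j p ≤ 0) : ∃ v ∈ K, ∃ c, ∀ i, f i v = c := by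
  let g : E → ℝ := fun v => Finset.univ.sup' Finset.univ_nonempty (f · v)
  have hg : ContinuousOn g K :=
    ContinuousOn.finset_sup'_apply Finset.univ_nonempty fun i _ => hcont i
  obtain ⟨v₀, hv₀, hmin⟩ := hK.exists_isMinOn hKne hg
  have hle : ∀ i, f i v₀ ≤ g v₀ := fun i => Finset.le_sup' (f · v₀) (Finset.mem_univ i)
  refine ⟨v₀, hv₀, g v₀, fun i₀ => (hle i₀).antisymm (not_lt.1 fun hi₀ => ?_)⟩
  obtain ⟨p, hp, hp_le⟩ := hvertex i₀
  obtain ⟨v, hv, hlt⟩ := exists_mem_forall_lt_of_convexOn hKconv hcont hconv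
    ((hnonneg i₀ v₀ hv₀).trans_lt hi₀) hv₀ hp hi₀ hle hp_le
  exact (hmin hv).not_gt ((Finset.sup'_lt_iff _).2 fun i _ => hlt i)

end Equalization

theorem stmt_0_general (n : ℕ) (a : Fin (n + 1) → EuclideanSpace ℝ (Fin n))
    (S : Set (EuclideanSpace ℝ (Fin n))) (hS : S = convexHull ℝ (Set.range a))
    (face : Fin (n + 1) → Set (EuclideanSpace ℝ (Fin n)))
    (hface : ∀ i, face i = convexHull ℝ (a '' {j | j ≠ i}))
    (A : Fin (n + 1) → Set (EuclideanSpace ℝ (Fin n)))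
    (hAconv : ∀ i, Convex ℝ (A i))
    (hfaceA : ∀ i, face i ⊆ A i) :
    ∃ v ∈ S, ∃ ε₀ : ℝ, 0 ≤ ε₀ ∧ ∀ i, Metric.infDist v (A i) = ε₀ := by
  have ha_mem : ∀ i, a i ∈ S := fun i => hS ▸ subset_convexHull ℝ _ (mem_range_self i)
  have hSconv : Convex ℝ S := hS ▸ convex_convexHull ℝ _
  have ha_mem_A : ∀ i j, j ≠ i → a i ∈ A j := fun i j hji =>
    hfaceA j <| hface j ▸ subset_convexHull ℝ _ ⟨i, hji.symm, rfl⟩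
  obtain ⟨v, hv, ε₀, hε₀⟩ := IsCompact.exists_mem_forall_eq_of_convexOn
    (hS ▸ (finite_range a).isCompact_convexHull ℝ) hSconv ⟨a 0, ha_mem 0⟩
    (fun i => (continuous_infDist_pt (A i)).continuousOn)
    (fun i => (hAconv i).convexOn_infDist.subset (subset_univ S) hSconv)
    (fun i _ _ => infDist_nonneg)
    (fun i => ⟨a i, ha_mem i, fun j hji => (infDist_zero_of_mem (ha_mem_A i j hji)).le⟩)
  exact ⟨v, hv, ε₀, hε₀ 0 ▸ infDist_nonneg, hε₀⟩

theorem stmt_0 (n : ℕ) (a : Fin (n + 1) → EuclideanSpace ℝ (Fin n))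
    (ha : AffineIndependent ℝ a)
    (S : Set (EuclideanSpace ℝ (Fin n))) (hS : S = convexHull ℝ (Set.range a))
    (face : Fin (n + 1) → Set (EuclideanSpace ℝ (Fin n)))
    (hface : ∀ i, face i = convexHull ℝ (a '' {j | j ≠ i}))
    (A : Fin (n + 1) → Set (EuclideanSpace ℝ (Fin n)))
    (hAclosed : ∀ i, IsClosed (A i)) (hAconv : ∀ i, Convex ℝ (A i))
    (hAS : ∀ i, A i ⊆ S) (hfaceA : ∀ i, face i ⊆ A i) :
    ∃ v ∈ S, ∃ ε₀ : ℝ, 0 ≤ ε₀ ∧ ∀ i, Metric.infDist v (A i) = ε₀ :=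
  stmt_0_general n a S hS face hface A hAconv hfaceA
end

section
/- Let S be an n-simplex in R^n with maximal faces S^1,...,S^{n+1}, and let A^1,...,A^{n+1} be closed convex subsets of S with S^i ⊆ A^i for each i. If a point v ∈ S satisfies dist(v, A^i) = ε₀ > 0 for all i, then v is the unique point in S equidistant (at any common distance) from all the sets A^i. -/
open Metric Finset

lemma infDist_comb_le {E : Type*} [NormedAddCommGroup E] [NormedSpace ℝ E]
    {A : Set E} (hA : Convex ℝ A) (hne : A.Nonempty) (x y : E) {s t : ℝ}
    (hs : 0 ≤ s) (ht : 0 ≤ t) (hst : s + t = 1) :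
    infDist (s • x + t • y) A ≤ s * infDist x A + t * infDist y A := by
  refine le_of_forall_pos_le_add fun η hη => ?_
  obtain ⟨p, hp, hpd⟩ : ∃ p ∈ A, dist x p < infDist x A + η/2 :=
    (infDist_lt_iff hne).mp (by linarith)
  obtain ⟨q, hq, hqd⟩ : ∃ q ∈ A, dist y q < infDist y A + η/2 :=
    (infDist_lt_iff hne).mp (by linarith)
  have hmem : s • p + t • q ∈ A := hA hp hq hs ht hst
  have h1 : infDist (s • x + t • y) A ≤ dist (s • x + t • y) (s • p + t • q) :=
    infDist_le_dist_of_mem hmem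
  have h2 : dist (s • x + t • y) (s • p + t • q) ≤ s * dist x p + t * dist y q := by
    rw [dist_eq_norm, dist_eq_norm, dist_eq_norm]
    have heq : s • x + t • y - (s • p + t • q) = s • (x - p) + t • (y - q) := by module
    rw [heq]
    calc ‖s • (x - p) + t • (y - q)‖ ≤ ‖s • (x - p)‖ + ‖t • (y - q)‖ := norm_add_le _ _
      _ = s * ‖x - p‖ + t * ‖y - q‖ := by
          rw [norm_smul, norm_smul, Real.norm_of_nonneg hs, Real.norm_of_nonneg ht]
  nlinarith [mul_le_mul_of_nonneg_left hpd.le hs, mul_le_mul_of_nonneg_left hqd.le ht]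

lemma mem_hull_iff {E : Type*} [AddCommGroup E] [Module ℝ E] {m : ℕ}
    (a : Fin m → E) (x : E) : x ∈ convexHull ℝ (Set.range a) ↔
    ∃ w : Fin m → ℝ, (∀ i, 0 ≤ w i) ∧ ∑ i, w i = 1 ∧ ∑ i, w i • a i = x := by
  constructor
  · intro hx
    rw [convexHull_range_eq_exists_affineCombination] at hx
    obtain ⟨s, w, hw₀, hw₁, rfl⟩ := hx
    refine ⟨fun j => if j ∈ s then w j else 0, fun j => by by_cases h : j ∈ s <;> simp [h, hw₀ j], ?_, ?_⟩
    · rw [Finset.sum_ite_mem, Finset.univ_inter, hw₁]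
    · rw [Finset.affineCombination_eq_linear_combination _ _ _ hw₁]
      rw [← Finset.sum_subset (Finset.subset_univ s)
        (fun j _ hj => by simp [hj])]
      exact Finset.sum_congr rfl fun j hj => by simp [hj]
  · rintro ⟨w, hw₀, hw₁, rfl⟩
    have := Finset.centerMass_mem_convexHull Finset.univ (fun i _ => hw₀ i)
      (by rw [hw₁]; norm_num) (fun i _ => Set.mem_range_self (f := a) i)
    rwa [Finset.centerMass_eq_of_sum_1 _ _ hw₁] at this

lemma exit_face {n : ℕ} (a : Fin (n + 1) → EuclideanSpace ℝ (Fin n))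
    {x y : EuclideanSpace ℝ (Fin n)}
    (hx : x ∈ convexHull ℝ (Set.range a)) (hy : y ∈ convexHull ℝ (Set.range a))
    (hxy : x ≠ y) :
    ∃ i, ∃ p ∈ convexHull ℝ (a '' {j | j ≠ i}), ∃ u : ℝ, 0 < u ∧ u ≤ 1 ∧
      y = (1 - u) • x + u • p := by
  obtain ⟨c, hc₀, hc₁, hcx⟩ := (mem_hull_iff a x).mp hx
  obtain ⟨d, hd₀, hd₁, hdy⟩ := (mem_hull_iff a y).mp hy
  have hcd : c ≠ d := by
    rintro rfl; exact hxy (hcx.symm.trans hdy)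
  have hex : ∃ i, d i < c i := by
    by_contra h
    push_neg at h
    refine hcd (funext fun i => ?_)
    by_contra hne
    have hlt : c i < d i := lt_of_le_of_ne (h i) hne
    have : ∑ j, c j < ∑ j, d j :=
      Finset.sum_lt_sum (fun j _ => h j) ⟨i, Finset.mem_univ i, hlt⟩
    rw [hc₁, hd₁] at this; exact lt_irrefl _ this
  set T : Finset (Fin (n+1)) := Finset.univ.filter (fun i => d i < c i) with hT
  have hTne : T.Nonempty := by
    obtain ⟨i, hi⟩ := hex
    exact ⟨i, Finset.mem_filter.mpr ⟨Finset.mem_univ i, hi⟩⟩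
  set f : Fin (n+1) → ℝ := fun i => c i / (c i - d i) with hf
  obtain ⟨i, hiT, hmin⟩ := T.exists_min_image f hTne
  have hiTd : d i < c i := (Finset.mem_filter.mp hiT).2
  have hci : 0 < c i := lt_of_le_of_lt (hd₀ i) hiTd
  set t : ℝ := f i with ht
  have htpos : 0 < t := div_pos hci (by linarith)
  have ht1 : 1 ≤ t := by
    rw [ht, hf, le_div_iff₀ (by linarith)]
    have := hd₀ i; linarith
  set e : Fin (n+1) → ℝ := fun j => c j + t * (d j - c j) with he
  have he₀ : ∀ j, 0 ≤ e j := by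
    intro j
    by_cases hj : d j < c j
    · have hjT : j ∈ T := Finset.mem_filter.mpr ⟨Finset.mem_univ j, hj⟩
      have h3 : t ≤ f j := hmin j hjT
      rw [hf, le_div_iff₀ (by linarith)] at h3
      simp only [he]; nlinarith
    · push_neg at hj
      have h4 : 0 ≤ t * (d j - c j) := mul_nonneg htpos.le (by linarith)
      have := hc₀ j
      simp only [he]; linarith
  have hsub : c i - d i ≠ 0 := by linarith
  have hei : e i = 0 := by
    simp only [he, hf, ht]
    field_simp
    ring
  have hesum : ∑ j, e j = 1 := by
    simp only [he]
    rw [Finset.sum_add_distrib, hc₁, ← Finset.mul_sum, Finset.sum_sub_distrib, hc₁, hd₁]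
    ring
  set p : EuclideanSpace ℝ (Fin n) := ∑ j, e j • a j with hp
  have hsum' : ∑ j ∈ Finset.univ.erase i, e j = 1 := by
    rw [Finset.sum_erase _ hei]; exact hesum
  have hpface : p ∈ convexHull ℝ (a '' {j | j ≠ i}) := by
    have hmem := Finset.centerMass_mem_convexHull (Finset.univ.erase i)
      (fun j _ => he₀ j) (by rw [hsum']; norm_num)
      (fun j hj => Set.mem_image_of_mem a (show j ∈ {j | j ≠ i} from (Finset.mem_erase.mp hj).1))
    rwa [Finset.centerMass_eq_of_sum_1 _ _ hsum',
      Finset.sum_erase (f := fun j => e j • a j) Finset.univ (show e i • a i = 0 by rw [hei, zero_smul])] at hmem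
  refine ⟨i, p, hpface, 1 / t, by positivity, ?_, ?_⟩
  · rw [div_le_one htpos]; exact ht1
  rw [← hdy, ← hcx, hp]
  rw [Finset.smul_sum, Finset.smul_sum, ← Finset.sum_add_distrib]
  refine Finset.sum_congr rfl fun j _ => ?_
  rw [smul_smul, smul_smul, ← add_smul]
  congr 1
  simp only [he]
  field_simp
  ring

theorem stmt_1 (n : ℕ) (a : Fin (n + 1) → EuclideanSpace ℝ (Fin n))
    (ha : AffineIndependent ℝ a)
    (S : Set (EuclideanSpace ℝ (Fin n))) (hS : S = convexHull ℝ (Set.range a))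
    (face : Fin (n + 1) → Set (EuclideanSpace ℝ (Fin n)))
    (hface : ∀ i, face i = convexHull ℝ (a '' {j | j ≠ i}))
    (A : Fin (n + 1) → Set (EuclideanSpace ℝ (Fin n)))
    (hAclosed : ∀ i, IsClosed (A i)) (hAconv : ∀ i, Convex ℝ (A i))
    (hAS : ∀ i, A i ⊆ S) (hfaceA : ∀ i, face i ⊆ A i)
    (v : EuclideanSpace ℝ (Fin n)) (hv : v ∈ S) (ε₀ : ℝ) (hε₀ : 0 < ε₀)
    (hvd : ∀ i, Metric.infDist v (A i) = ε₀) :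
    ∀ w ∈ S, ∀ ε : ℝ, (∀ i, Metric.infDist w (A i) = ε) → w = v := by
  intro w hw ε hwd
  by_contra hne
  have hAne : ∀ i, (A i).Nonempty := by
    intro i
    rw [Set.nonempty_iff_ne_empty]
    intro h
    have := hvd i
    rw [h, Metric.infDist_empty] at this
    linarith
  have hεnn : 0 ≤ ε := by rw [← hwd 0]; exact Metric.infDist_nonneg
  rw [hS] at hv hw
  obtain ⟨i, p, hpf, u, hu0, hu1, hwe⟩ := exit_face a hv hw (Ne.symm hne)
  have hpA : p ∈ A i := hfaceA i (by rw [hface i]; exact hpf)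
  have h1 : ε ≤ (1 - u) * ε₀ := by
    have hcomb := infDist_comb_le (hAconv i) (hAne i) v p (s := 1 - u) (t := u)
      (by linarith) hu0.le (by ring)
    rw [← hwe, hwd i, hvd i, Metric.infDist_zero_of_mem hpA] at hcomb
    linarith
  obtain ⟨j, q, hqf, u', hu'0, hu'1, hve⟩ := exit_face a hw hv hne
  have hqA : q ∈ A j := hfaceA j (by rw [hface j]; exact hqf)
  have h2 : ε₀ ≤ (1 - u') * ε := by
    have hcomb := infDist_comb_le (hAconv j) (hAne j) w q (s := 1 - u') (t := u')
      (by linarith) hu'0.le (by ring)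
    rw [← hve, hvd j, hwd j, Metric.infDist_zero_of_mem hqA] at hcomb
    linarith
  nlinarith
end

section
/- Let S be an n-simplex in R^n with maximal faces S^i, and let A^1,...,A^{n+1} be closed convex subsets of S with S^i ⊆ A^i for each i. If the sets A^i have a common point v (i.e., ∩_i A^i ≠ ∅), then the union ∪_i A^i covers S. -/
/-!
Write `x` and the common point `v` in barycentric coordinates `w` and `c` with respect to the
vertices `a j`. For the largest `t ≥ 0` with `t • c ≤ w`, some coordinate `w i - t * c i` vanishes,
so `x = t • v + ∑ j ≠ i, (w j - t * c j) • a j` is a convex combination of `v` and the vertices of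
the face `S^i`, all of which lie in the convex set `A^i`.
-/

open Finset Function

section Barycentric

variable {ι E : Type*} [Fintype ι] [AddCommGroup E] [Module ℝ E]

lemma exists_weights_of_mem_convexHull_range {a : ι → E} {x : E}
    (hx : x ∈ convexHull ℝ (Set.range a)) :
    ∃ w : ι → ℝ, (∀ j, 0 ≤ w j) ∧ ∑ j, w j = 1 ∧ ∑ j, w j • a j = x := by
  classical
  rw [convexHull_range_eq_exists_affineCombination] at hx
  obtain ⟨s, w, hw₀, hw₁, rfl⟩ := hx
  refine ⟨fun j => if j ∈ s then w j else 0, fun j => ?_, ?_, ?_⟩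
  · by_cases hj : j ∈ s <;> simp [hj, hw₀]
  · rw [sum_ite_mem, univ_inter, hw₁]
  · simp only [ite_smul, zero_smul]
    rw [sum_ite_mem, univ_inter, s.affineCombination_eq_linear_combination a w hw₁]

lemma exists_eq_mul_and_mul_le {w c : ι → ℝ} (hw : ∀ j, 0 ≤ w j) (hc : ∃ j, 0 < c j) :
    ∃ i t, 0 ≤ t ∧ w i = t * c i ∧ ∀ j, t * c j ≤ w j := by
  obtain ⟨j₀, hj₀⟩ := hc
  obtain ⟨i, hi, hmin⟩ := exists_min_image {j | 0 < c j} (fun j => w j / c j) ⟨j₀, by simpa⟩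
  have hci : 0 < c i := by simpa using hi
  refine ⟨i, w i / c i, div_nonneg (hw i) hci.le, (div_mul_cancel₀ _ hci.ne').symm, fun j => ?_⟩
  rcases lt_or_ge 0 (c j) with hcj | hcj
  · exact (le_div_iff₀ hcj).mp (hmin j (by simpa using hcj))
  · exact (mul_nonpos_of_nonneg_of_nonpos (div_nonneg (hw i) hci.le) hcj).trans (hw j)

lemma sum_update_of_eq_zero {M : Type*} [AddCommMonoid M] [DecidableEq ι] {f : ι → M} {i : ι}
    (hf : f i = 0) (b : M) : ∑ j, update f i b j = b + ∑ j, f j := by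
  rw [sum_update_of_mem (mem_univ i), sum_eq_add_sum_sdiff_singleton_of_mem (mem_univ i) f, hf,
    zero_add]

theorem exists_mem_convexHull_insert_image_ne {a : ι → E} {v x : E}
    (hv : v ∈ convexHull ℝ (Set.range a)) (hx : x ∈ convexHull ℝ (Set.range a)) :
    ∃ i, x ∈ convexHull ℝ (insert v (a '' {j | j ≠ i})) := by
  classical
  obtain ⟨w, hw₀, hw₁, hwx⟩ := exists_weights_of_mem_convexHull_range hx
  obtain ⟨c, -, hc₁, hcv⟩ := exists_weights_of_mem_convexHull_range hv
  have hc_pos : ∃ j, 0 < c j := by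
    simpa using exists_lt_of_sum_lt (s := univ) (f := fun _ => (0 : ℝ)) (g := c) (by simp [hc₁])
  obtain ⟨i, t, ht, hwi, hle⟩ := exists_eq_mul_and_mul_le hw₀ hc_pos
  have hrest : w i - t * c i = 0 := sub_eq_zero.mpr hwi
  refine ⟨i, mem_convexHull_of_exists_fintype (update (fun j => w j - t * c j) i t)
    (update a i v) (fun j => ?_) ?_ (fun j => ?_) ?_⟩
  · rcases eq_or_ne j i with rfl | hj
    · simpa using ht
    · simpa [hj] using hle j
  · rw [sum_update_of_eq_zero (f := fun j => w j - t * c j) hrest, sum_sub_distrib, ← mul_sum, hw₁,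
      hc₁]
    ring
  · rcases eq_or_ne j i with rfl | hj
    · simp
    · simpa [hj] using Or.inr ⟨j, hj, rfl⟩
  · have hterm : ∀ j, update (fun j => w j - t * c j) i t j • update a i v j =
        update (fun j => (w j - t * c j) • a j) i (t • v) j := by
      intro j
      rcases eq_or_ne j i with rfl | hj <;> simp [*]
    simp_rw [hterm]
    rw [sum_update_of_eq_zero (f := fun j => (w j - t * c j) • a j) (by simp [hrest]), ← hwx,
      ← hcv]
    simp only [sub_smul, sum_sub_distrib, mul_smul, ← smul_sum]
    abel

end Barycentric

theorem stmt_2_general (n : ℕ) (a : Fin (n + 1) → EuclideanSpace ℝ (Fin n))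
    (S : Set (EuclideanSpace ℝ (Fin n))) (hS : S = convexHull ℝ (Set.range a))
    (face : Fin (n + 1) → Set (EuclideanSpace ℝ (Fin n)))
    (hface : ∀ i, face i = convexHull ℝ (a '' {j | j ≠ i}))
    (A : Fin (n + 1) → Set (EuclideanSpace ℝ (Fin n)))
    (hAconv : ∀ i, Convex ℝ (A i))
    (hAS : ∀ i, A i ⊆ S) (hfaceA : ∀ i, face i ⊆ A i)
    (hcap : (⋂ i, A i).Nonempty) :
    S ⊆ ⋃ i, A i := by
  obtain ⟨v, hv⟩ := hcap
  have hvA : ∀ i, v ∈ A i := Set.mem_iInter.mp hv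
  intro x hx
  rw [hS] at hx
  obtain ⟨i, hxi⟩ := exists_mem_convexHull_insert_image_ne (hS ▸ hAS 0 (hvA 0)) hx
  have hvertices : a '' {j | j ≠ i} ⊆ A i :=
    (subset_convexHull ℝ _).trans (hface i ▸ hfaceA i)
  exact Set.mem_iUnion.mpr
    ⟨i, convexHull_min (Set.insert_subset (hvA i) hvertices) (hAconv i) hxi⟩

theorem stmt_2 (n : ℕ) (a : Fin (n + 1) → EuclideanSpace ℝ (Fin n))
    (ha : AffineIndependent ℝ a)
    (S : Set (EuclideanSpace ℝ (Fin n))) (hS : S = convexHull ℝ (Set.range a))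
    (face : Fin (n + 1) → Set (EuclideanSpace ℝ (Fin n)))
    (hface : ∀ i, face i = convexHull ℝ (a '' {j | j ≠ i}))
    (A : Fin (n + 1) → Set (EuclideanSpace ℝ (Fin n)))
    (hAclosed : ∀ i, IsClosed (A i)) (hAconv : ∀ i, Convex ℝ (A i))
    (hAS : ∀ i, A i ⊆ S) (hfaceA : ∀ i, face i ⊆ A i)
    (hcap : (⋂ i, A i).Nonempty) :
    S ⊆ ⋃ i, A i :=
  stmt_2_general n a S hS face hface A hAconv hAS hfaceA hcap
end

section
/- Let S be an n-simplex in R^n with maximal faces S^i, and let A^1,...,A^{n+1} be closed convex subsets of S with S^i ⊆ A^i and S \ ∪_i A^i ≠ ∅. With A^i_ε = {x ∈ S : dist(x, A^i) ≤ ε} and ε₀ = inf{ε : ∩_i A^i_ε ≠ ∅}, the set B = ∩_i A^i_{ε₀} is a single point v, and dist(v, A^i) = ε₀ for all i. -/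
/-!
Write `dᵢ = infDist · (A i)`. Each `dᵢ` is convex and vanishes on the facet opposite `a i`, and
`ε₀ = min_S maxᵢ dᵢ` is attained because `S` is compact. If a point `v` of `B` had `dᵢ v < ε₀`,
moving `v` slightly towards the vertex `a i ∈ A j` (`j ≠ i`) would push every `dⱼ` below `ε₀`,
contradicting minimality; so all `dᵢ` equal `ε₀` on `B`. If `B` contained `v ≠ w`, the ray from `v`
through `w` leaves `S` at a point of a facet `⊆ A j`, and convexity of `dⱼ` gives `dⱼ w < ε₀`
unless `ε₀ = 0`. That case is excluded by the same ray argument: a point at distance `0` from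
every `A i` other than the point `q ∈ S \ ⋃ A i` would put `q` into some `A j`.
-/

open Metric Set AffineMap Topology

theorem Metric.infDist_lineMap_le {E : Type*} [NormedAddCommGroup E] [NormedSpace ℝ E]
    {A : Set E} (hA : Convex ℝ A) {y : E} (hy : y ∈ A) (x : E) {t : ℝ} (ht : t ∈ Icc 0 1) :
    infDist (lineMap x y t) A ≤ (1 - t) * infDist x A := by
  have : Nonempty A := ⟨⟨y, hy⟩⟩
  have ht' : 0 ≤ 1 - t := by linarith [ht.2]
  rw [infDist_eq_iInf (x := x), Real.mul_iInf_of_nonneg ht']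
  refine le_ciInf fun a => ?_
  calc infDist (lineMap x y t) A ≤ dist (lineMap x y t) (lineMap (a : E) y t) :=
        infDist_le_dist_of_mem (hA.lineMap_mem a.2 hy ht)
    _ = (1 - t) * dist x a := by
        have : lineMap x y t - lineMap (a : E) y t = (1 - t) • (x - a) := by
          simp only [lineMap_apply_module]
          module
        rw [dist_eq_norm, dist_eq_norm, this, norm_smul, Real.norm_of_nonneg ht']

section
variable {ι 𝕜 E : Type*} [Fintype ι] [Field 𝕜] [LinearOrder 𝕜] [IsStrictOrderedRing 𝕜]
  [AddCommGroup E] [Module 𝕜 E]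

namespace AffineBasis
variable (b : AffineBasis ι 𝕜 E)

theorem mem_convexHull_image_ne_of_coord_eq_zero {y : E} (hy : ∀ k, 0 ≤ b.coord k y) {j : ι}
    (hj : b.coord j y = 0) : y ∈ convexHull 𝕜 (b '' {k | k ≠ j}) := by
  classical
  rw [← b.linear_combination_coord_eq_self y, ← Finset.sum_erase _ (by rw [hj, zero_smul])]
  refine (convex_convexHull 𝕜 _).sum_mem (fun k _ => hy k) ?_
    fun k hk => subset_convexHull 𝕜 _ ⟨k, Finset.ne_of_mem_erase hk, rfl⟩
  rw [Finset.sum_erase (f := fun k => b.coord k y) _ hj, b.sum_coord_apply_eq_one]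

/-- The ray from `x` through `q` leaves the simplex at a point `y` of a facet, beyond `q`. -/
theorem exists_lineMap_eq_of_mem_convexHull {x q : E} (hq : q ∈ convexHull 𝕜 (range b))
    (hxq : x ≠ q) :
    ∃ j, ∃ y ∈ convexHull 𝕜 (b '' {k | k ≠ j}), ∃ s ∈ Ioc (0 : 𝕜) 1, lineMap x y s = q := by
  classical
  rw [b.convexHull_eq_nonneg_coord] at hq
  obtain ⟨k₀, hk₀⟩ : ∃ k, b.coord k q < b.coord k x := by
    by_contra! h
    refine hxq (b.ext_elem fun k => ?_)
    refine (Finset.sum_eq_sum_iff_of_le fun k _ => h k).1 ?_ k (Finset.mem_univ k)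
    rw [b.sum_coord_apply_eq_one, b.sum_coord_apply_eq_one]
  obtain ⟨j, hj, hjmin⟩ := ({k | b.coord k q < b.coord k x} : Finset ι).exists_min_image
    (fun k => b.coord k q / (b.coord k x - b.coord k q)) ⟨k₀, by simpa using hk₀⟩
  simp only [Finset.mem_filter, Finset.mem_univ, true_and] at hj hjmin
  set t := b.coord j q / (b.coord j x - b.coord j q)
  have ht : 0 ≤ t := div_nonneg (hq j) (by linarith)
  have hcoord : ∀ k, b.coord k (lineMap x q (1 + t)) =
      b.coord k q - t * (b.coord k x - b.coord k q) := by
    intro k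
    rw [apply_lineMap, lineMap_apply_ring']
    ring
  refine ⟨j, lineMap x q (1 + t), b.mem_convexHull_image_ne_of_coord_eq_zero (fun k => ?_) ?_,
    (1 + t)⁻¹, ⟨by positivity, inv_le_one_of_one_le₀ (by linarith)⟩, ?_⟩
  · rw [hcoord]
    rcases lt_or_ge (b.coord k q) (b.coord k x) with hk | hk
    · have := hjmin k hk
      rw [le_div_iff₀ (by linarith)] at this
      linarith
    · nlinarith [hq k]
  · rw [hcoord, div_mul_cancel₀ _ (by linarith : b.coord j x - b.coord j q ≠ 0), sub_self]
  · rw [lineMap_lineMap_right, inv_mul_cancel₀ (by linarith), lineMap_apply_one]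

end AffineBasis
end

theorem IsCompact.exists_forall_le_of_eq_sInf {X ι : Type*} [TopologicalSpace X] [Fintype ι]
    [Nonempty ι] {S : Set X} (hS : IsCompact S) (hSne : S.Nonempty) {f : ι → X → ℝ}
    (hf : ∀ i, Continuous (f i)) (hf0 : ∀ i x, 0 ≤ f i x) {ε₀ : ℝ}
    (hε₀ : ε₀ = sInf {ε : ℝ | 0 ≤ ε ∧ (⋂ i, {x ∈ S | f i x ≤ ε}).Nonempty}) :
    ∃ v ∈ S, (∀ i, f i v ≤ ε₀) ∧ ∀ x ∈ S, ∃ i, ε₀ ≤ f i x := by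
  set g : X → ℝ := fun x => Finset.univ.sup' Finset.univ_nonempty (f · x)
  have hfg : ∀ i x, f i x ≤ g x := fun i x => Finset.le_sup' (f · x) (Finset.mem_univ i)
  obtain ⟨v, hvS, hvmin⟩ := hS.exists_isMinOn hSne
    (Continuous.finset_sup'_apply _ fun i _ => hf i).continuousOn
  have hleast : IsLeast {ε : ℝ | 0 ≤ ε ∧ (⋂ i, {x ∈ S | f i x ≤ ε}).Nonempty} (g v) := by
    refine ⟨⟨(hf0 (Classical.arbitrary ι) v).trans (hfg _ v),
      v, mem_iInter.2 fun i => ⟨hvS, hfg i v⟩⟩, ?_⟩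
    rintro ε ⟨-, x, hx⟩
    obtain ⟨hxS, hxε⟩ : x ∈ S ∧ ∀ i, f i x ≤ ε := by simpa [forall_and] using hx
    exact (hvmin hxS).trans (Finset.sup'_le _ _ fun i _ => hxε i)
  rw [hleast.csInf_eq] at hε₀
  subst hε₀
  refine ⟨v, hvS, fun i => hfg i v, fun x hx => ?_⟩
  obtain ⟨i, -, hi⟩ := Finset.univ.exists_mem_eq_sup' Finset.univ_nonempty (f · x)
  exact ⟨i, hi ▸ hvmin hx⟩

theorem infDist_eq_of_forall_exists_le {ι E : Type*} [NormedAddCommGroup E] [NormedSpace ℝ E]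
    {S : Set E} (hS : Convex ℝ S) {A : ι → Set E} (hA : ∀ i, Convex ℝ (A i)) {p : ι → E}
    (hpS : ∀ i, p i ∈ S) (hpA : ∀ i j, i ≠ j → p i ∈ A j) {ε₀ : ℝ}
    (hmin : ∀ x ∈ S, ∃ i, ε₀ ≤ infDist x (A i)) {v : E} (hvS : v ∈ S)
    (hv : ∀ i, infDist v (A i) ≤ ε₀) (i : ι) : infDist v (A i) = ε₀ := by
  by_contra hne
  have hlt : infDist v (A i) < ε₀ := (hv i).lt_of_ne hne
  have hε₀ : 0 < ε₀ := infDist_nonneg.trans_lt hlt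
  have hnear : ∀ᶠ t in 𝓝[>] (0 : ℝ), infDist (lineMap v (p i) t) (A i) < ε₀ := by
    refine nhdsWithin_le_nhds (((continuous_infDist_pt _).comp lineMap_continuous).tendsto' 0 _
      ?_ |>.eventually (gt_mem_nhds hlt))
    simp
  obtain ⟨t, hti, ht0, ht1⟩ := (hnear.and (Ioc_mem_nhdsGT one_pos)).exists
  obtain ⟨j, hj⟩ := hmin _ (hS.lineMap_mem hvS (hpS i) ⟨ht0.le, ht1⟩)
  rcases eq_or_ne i j with rfl | hij
  · exact hj.not_gt hti
  · have := infDist_lineMap_le (hA j) (hpA i j hij) v ⟨ht0.le, ht1⟩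
    nlinarith [hv j]

namespace AffineBasis

variable {ι E : Type*} [Fintype ι] [NormedAddCommGroup E] [NormedSpace ℝ E]
  {b : AffineBasis ι ℝ E} {A : ι → Set E}

theorem eq_of_forall_infDist_nonpos (hAclosed : ∀ i, IsClosed (A i))
    (hAconv : ∀ i, Convex ℝ (A i)) (hface : ∀ i, convexHull ℝ (b '' {j | j ≠ i}) ⊆ A i)
    {q : E} (hq : q ∈ convexHull ℝ (range b)) (hqA : ∀ i, q ∉ A i) {x : E}
    (hx : ∀ i, infDist x (A i) ≤ 0) : x = q := by
  by_contra hxq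
  obtain ⟨j, y, hy, s, hs, rfl⟩ := b.exists_lineMap_eq_of_mem_convexHull hq hxq
  have hxA : x ∈ A j :=
    ((hAclosed j).mem_iff_infDist_zero ⟨y, hface j hy⟩).2 ((hx j).antisymm infDist_nonneg)
  exact hqA j ((hAconv j).lineMap_mem hxA (hface j hy) (Ioc_subset_Icc_self hs))

theorem eq_of_forall_infDist_le_of_forall_infDist_eq (hAclosed : ∀ i, IsClosed (A i))
    (hAconv : ∀ i, Convex ℝ (A i)) (hface : ∀ i, convexHull ℝ (b '' {j | j ≠ i}) ⊆ A i)
    {q : E} (hq : q ∈ convexHull ℝ (range b)) (hqA : ∀ i, q ∉ A i) {ε₀ : ℝ} {v w : E}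
    (hv : ∀ i, infDist v (A i) ≤ ε₀) (hwS : w ∈ convexHull ℝ (range b))
    (hw : ∀ i, infDist w (A i) = ε₀) : v = w := by
  by_contra hvw
  obtain ⟨j, y, hy, s, hs, rfl⟩ := b.exists_lineMap_eq_of_mem_convexHull hwS hvw
  have hε₀ : ε₀ ≤ 0 := by
    have h := (infDist_lineMap_le (hAconv j) (hface j hy) v (Ioc_subset_Icc_self hs)).trans
      (mul_le_mul_of_nonneg_left (hv j) (sub_nonneg.2 hs.2))
    rw [hw j] at h
    nlinarith [hs.1]
  exact hvw ((eq_of_forall_infDist_nonpos hAclosed hAconv hface hq hqA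
    fun i => (hv i).trans hε₀).trans (eq_of_forall_infDist_nonpos hAclosed hAconv hface hq hqA
      fun i => (hw i).le.trans hε₀).symm)

end AffineBasis

theorem stmt_5_general (n : ℕ) (a : Fin (n + 1) → EuclideanSpace ℝ (Fin n))
    (ha : AffineIndependent ℝ a)
    (S : Set (EuclideanSpace ℝ (Fin n))) (hS : S = convexHull ℝ (Set.range a))
    (face : Fin (n + 1) → Set (EuclideanSpace ℝ (Fin n)))
    (hface : ∀ i, face i = convexHull ℝ (a '' {j | j ≠ i}))
    (A : Fin (n + 1) → Set (EuclideanSpace ℝ (Fin n)))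
    (hAclosed : ∀ i, IsClosed (A i)) (hAconv : ∀ i, Convex ℝ (A i))
    (hfaceA : ∀ i, face i ⊆ A i)
    (hnc : (S \ ⋃ i, A i).Nonempty)
    (ε₀ : ℝ)
    (hε₀ : ε₀ = sInf {ε : ℝ | 0 ≤ ε ∧ (⋂ i, {x ∈ S | Metric.infDist x (A i) ≤ ε}).Nonempty}) :
    ∃ v : EuclideanSpace ℝ (Fin n),
      (⋂ i, {x ∈ S | Metric.infDist x (A i) ≤ ε₀}) = {v} ∧
      ∀ i, Metric.infDist v (A i) = ε₀ := by
  obtain ⟨q, hqS, hqA⟩ := hnc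
  let b : AffineBasis (Fin (n + 1)) ℝ (EuclideanSpace ℝ (Fin n)) :=
    ⟨a, ha, ha.affineSpan_eq_top_iff_card_eq_finrank_add_one.2 (by simp)⟩
  replace hS : S = convexHull ℝ (range b) := hS
  replace hfaceA : ∀ i, convexHull ℝ (b '' {j | j ≠ i}) ⊆ A i := fun i => hface i ▸ hfaceA i
  replace hqA : ∀ i, q ∉ A i := fun i hi => hqA (mem_iUnion_of_mem i hi)
  subst hS
  obtain ⟨v, hvS, hv, hmin⟩ :=
    ((finite_range b).isCompact_convexHull (𝕜 := ℝ)).exists_forall_le_of_eq_sInf ⟨q, hqS⟩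
      (fun i => continuous_infDist_pt (A i)) (fun _ _ => infDist_nonneg) hε₀
  have heq : ∀ x ∈ convexHull ℝ (range b), (∀ i, infDist x (A i) ≤ ε₀) →
      ∀ i, infDist x (A i) = ε₀ :=
    fun x => infDist_eq_of_forall_exists_le (convex_convexHull ℝ _) hAconv
      (fun i => subset_convexHull ℝ _ (mem_range_self i))
      (fun i j hij => hfaceA j (subset_convexHull ℝ _ ⟨i, hij, rfl⟩)) hmin
  refine ⟨v, Subset.antisymm (fun w hw => ?_) ?_, heq v hvS hv⟩
  · obtain ⟨hwS, hwA⟩ : w ∈ convexHull ℝ (range b) ∧ ∀ i, infDist w (A i) ≤ ε₀ := by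
      simpa [forall_and] using hw
    exact (AffineBasis.eq_of_forall_infDist_le_of_forall_infDist_eq hAclosed hAconv hfaceA
      hqS hqA hv hwS (heq w hwS hwA)).symm
  · simpa using fun i => And.intro hvS (hv i)

theorem stmt_5 (n : ℕ) (a : Fin (n + 1) → EuclideanSpace ℝ (Fin n))
    (ha : AffineIndependent ℝ a)
    (S : Set (EuclideanSpace ℝ (Fin n))) (hS : S = convexHull ℝ (Set.range a))
    (face : Fin (n + 1) → Set (EuclideanSpace ℝ (Fin n)))
    (hface : ∀ i, face i = convexHull ℝ (a '' {j | j ≠ i}))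
    (A : Fin (n + 1) → Set (EuclideanSpace ℝ (Fin n)))
    (hAclosed : ∀ i, IsClosed (A i)) (hAconv : ∀ i, Convex ℝ (A i))
    (hAS : ∀ i, A i ⊆ S) (hfaceA : ∀ i, face i ⊆ A i)
    (hnc : (S \ ⋃ i, A i).Nonempty)
    (ε₀ : ℝ)
    (hε₀ : ε₀ = sInf {ε : ℝ | 0 ≤ ε ∧ (⋂ i, {x ∈ S | Metric.infDist x (A i) ≤ ε}).Nonempty}) :
    ∃ v : EuclideanSpace ℝ (Fin n),
      (⋂ i, {x ∈ S | Metric.infDist x (A i) ≤ ε₀}) = {v} ∧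
      ∀ i, Metric.infDist v (A i) = ε₀ :=
  stmt_5_general n a ha S hS face hface A hAclosed hAconv hfaceA hnc ε₀ hε₀
end

section
/- Let S be an n-simplex in R^n with faces S^i. Suppose {A^1,...,A^{n+1}} and {D^1,...,D^{n+1}} are both families of closed convex subsets of S with S^i ⊆ A^i ⊆ D^i, neither family covering S. If ε₀ and ε₁ are respectively the common distances of the equally spaced points to the families {A^i} and {D^i}, then ε₁ ≤ ε₀. -/
/-! Follow the ray from `v₀` through `v₁` until it leaves the simplex, at a point `x` of some
face `S^i ⊆ A^i`. Then `v₁` lies on the segment `[v₀, x]`, and the homothety centred at `x`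
sending `v₀` to `v₁` maps the convex set `A^i` into itself, so
`dist(v₁, D^i) ≤ dist(v₁, A^i) ≤ dist(v₀, A^i)`. -/

open Metric Set

theorem Convex.infDist_le_infDist_of_mem_segment {E : Type*} [SeminormedAddCommGroup E]
    [NormedSpace ℝ E] {A : Set E} (hA : Convex ℝ A) {v x y : E} (hx : x ∈ A)
    (hy : y ∈ segment ℝ v x) : infDist y A ≤ infDist v A := by
  obtain ⟨s, t, hs, ht, hst, rfl⟩ := hy
  refine (le_infDist ⟨x, hx⟩).2 fun p hp => ?_
  calc infDist (s • v + t • x) A ≤ dist (s • v + t • x) (s • p + t • x) :=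
        infDist_le_dist_of_mem (hA hp hx hs ht hst)
    _ = s * dist v p := by rw [dist_add_right, dist_smul₀, Real.norm_of_nonneg hs]
    _ ≤ dist v p := mul_le_of_le_one_left dist_nonneg (by linarith)

theorem IsCompact.exists_mem_frontier_mem_segment {E : Type*} [NormedAddCommGroup E]
    [NormedSpace ℝ E] {S : Set E} (hS : IsCompact S) {v₀ v₁ : E} (hv₁ : v₁ ∈ S)
    (hne : v₀ ≠ v₁) : ∃ x ∈ frontier S, v₁ ∈ segment ℝ v₀ x := by
  set f : ℝ →ᵃ[ℝ] E := AffineMap.lineMap v₀ v₁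
  have hf : AntilipschitzWith (nndist v₀ v₁)⁻¹ f := by
    refine AntilipschitzWith.of_le_mul_dist fun s t => ?_
    have hd : 0 < dist v₀ v₁ := dist_pos.2 hne
    rw [dist_lineMap_lineMap, NNReal.coe_inv, coe_nndist, mul_comm (dist s t),
      inv_mul_cancel_left₀ hd.ne']
  have hK : IsCompact (f ⁻¹' S) :=
    isCompact_of_isClosed_isBounded (hS.isClosed.preimage f.continuous_of_finiteDimensional)
      (hf.isBounded_preimage hS.isBounded)
  -- `f T` is the last point of the ray from `v₀` through `v₁` that lies in `S`.
  obtain ⟨T, hTK, hTmax⟩ := hK.exists_isGreatest ⟨1, by simpa [f] using hv₁⟩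
  have hT : 1 ≤ T := hTmax (by simpa [f] using hv₁)
  refine ⟨f T, ?_, ?_⟩
  · rw [hS.isClosed.frontier_eq]
    refine ⟨hTK, fun hint => ?_⟩
    obtain ⟨ε, hε, hball⟩ :=
      Metric.mem_nhds_iff.1 (f.continuous_of_finiteDimensional.continuousAt.preimage_mem_nhds
        (isOpen_interior.mem_nhds hint))
    have hbeyond : T + ε / 2 ∈ f ⁻¹' interior S := hball (by
      rw [mem_ball, Real.dist_eq, add_sub_cancel_left, abs_of_pos (half_pos hε)]; linarith)
    linarith [hTmax (interior_subset (s := S) hbeyond)]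
  · have h1 : (1 : ℝ) ∈ segment ℝ 0 T := by
      rw [segment_eq_Icc (by linarith)]; exact ⟨zero_le_one, hT⟩
    simpa [f, image_segment] using mem_image_of_mem f h1

theorem AffineBasis.mem_convexHull_image_ne_of_coord_eq_zero_s7 {ι R E : Type*} [Fintype ι]
    [Field R] [LinearOrder R] [IsStrictOrderedRing R] [AddCommGroup E]
    [Module R E] (b : AffineBasis ι R E) {x : E} (hx : x ∈ convexHull R (range b)) {i : ι}
    (hi : b.coord i x = 0) : x ∈ convexHull R (b '' {j | j ≠ i}) := by
  classical
  rw [b.convexHull_eq_nonneg_coord] at hx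
  have hsum : ∑ j ∈ Finset.univ.erase i, b.coord j x = 1 := by
    rw [Finset.sum_erase (f := fun j => b.coord j x) _ hi, b.sum_coord_apply_eq_one]
  have hcm : (Finset.univ.erase i).centerMass (fun j => b.coord j x) b = x := by
    rw [Finset.centerMass_subset b (Finset.subset_univ _) (by simp [hi]),
      ← affineCombination_eq_centerMass (b.sum_coord_apply_eq_one x),
      b.affineCombination_coord_eq_self]
  rw [← hcm]
  exact Finset.centerMass_mem_convexHull _ (fun j _ => hx j) (by rw [hsum]; exact one_pos)
    fun j hj => mem_image_of_mem b (Finset.ne_of_mem_erase hj)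

theorem AffineBasis.frontier_convexHull_subset {ι E : Type*} [Fintype ι] [NormedAddCommGroup E]
    [NormedSpace ℝ E] (b : AffineBasis ι ℝ E) :
    frontier (convexHull ℝ (range b)) ⊆ ⋃ i, convexHull ℝ (b '' {j | j ≠ i}) := by
  classical
  intro x hx
  rw [((finite_range b).isCompact_convexHull (𝕜 := ℝ)).isClosed.frontier_eq,
    b.interior_convexHull] at hx
  obtain ⟨hxS, hxint⟩ := hx
  simp only [mem_ofPred_eq, not_forall, not_lt] at hxint
  obtain ⟨i, hi⟩ := hxint
  have hi' : 0 ≤ b.coord i x := (b.convexHull_eq_nonneg_coord ▸ hxS :) i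
  exact mem_iUnion.2 ⟨i, b.mem_convexHull_image_ne_of_coord_eq_zero_s7 hxS (le_antisymm hi hi')⟩

theorem stmt_7_general (n : ℕ) (a : Fin (n + 1) → EuclideanSpace ℝ (Fin n))
    (ha : AffineIndependent ℝ a)
    (S : Set (EuclideanSpace ℝ (Fin n))) (hS : S = convexHull ℝ (Set.range a))
    (face : Fin (n + 1) → Set (EuclideanSpace ℝ (Fin n)))
    (hface : ∀ i, face i = convexHull ℝ (a '' {j | j ≠ i}))
    (A : Fin (n + 1) → Set (EuclideanSpace ℝ (Fin n)))
    (hAconv : ∀ i, Convex ℝ (A i))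
    (hfaceA : ∀ i, face i ⊆ A i)
    (D : Fin (n + 1) → Set (EuclideanSpace ℝ (Fin n)))
    (hAD : ∀ i, A i ⊆ D i)
    (v₀ v₁ : EuclideanSpace ℝ (Fin n)) (hv₁ : v₁ ∈ S)
    (ε₀ ε₁ : ℝ) (hε₀ : 0 < ε₀)
    (hd₀ : ∀ i, Metric.infDist v₀ (A i) = ε₀)
    (hd₁ : ∀ i, Metric.infDist v₁ (D i) = ε₁) :
    ε₁ ≤ ε₀ := by
  rcases eq_or_ne v₀ v₁ with rfl | hne
  · have hA : (A 0).Nonempty := nonempty_iff_ne_empty.2 fun h => by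
      simpa [h, hε₀.ne] using hd₀ 0
    rw [← hd₀ 0, ← hd₁ 0]
    exact infDist_le_infDist_of_subset (hAD 0) hA
  have hspan : affineSpan ℝ (range a) = ⊤ := by
    rw [ha.affineSpan_eq_top_iff_card_eq_finrank_add_one]; simp
  let b : AffineBasis (Fin (n + 1)) ℝ (EuclideanSpace ℝ (Fin n)) := ⟨a, ha, hspan⟩
  have hScompact : IsCompact S := hS ▸ (finite_range a).isCompact_convexHull (𝕜 := ℝ)
  obtain ⟨x, hx, hv₁x⟩ := hScompact.exists_mem_frontier_mem_segment hv₁ hne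
  obtain ⟨i, hxi⟩ := mem_iUnion.1 (b.frontier_convexHull_subset (hS ▸ hx))
  have hxA : x ∈ A i := hfaceA i (hface i ▸ hxi)
  calc ε₁ = infDist v₁ (D i) := (hd₁ i).symm
    _ ≤ infDist v₁ (A i) := infDist_le_infDist_of_subset (hAD i) ⟨x, hxA⟩
    _ ≤ infDist v₀ (A i) := (hAconv i).infDist_le_infDist_of_mem_segment hxA hv₁x
    _ = ε₀ := hd₀ i

theorem stmt_7 (n : ℕ) (a : Fin (n + 1) → EuclideanSpace ℝ (Fin n))
    (ha : AffineIndependent ℝ a)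
    (S : Set (EuclideanSpace ℝ (Fin n))) (hS : S = convexHull ℝ (Set.range a))
    (face : Fin (n + 1) → Set (EuclideanSpace ℝ (Fin n)))
    (hface : ∀ i, face i = convexHull ℝ (a '' {j | j ≠ i}))
    (A : Fin (n + 1) → Set (EuclideanSpace ℝ (Fin n)))
    (hAclosed : ∀ i, IsClosed (A i)) (hAconv : ∀ i, Convex ℝ (A i))
    (hAS : ∀ i, A i ⊆ S) (hfaceA : ∀ i, face i ⊆ A i)
    (D : Fin (n + 1) → Set (EuclideanSpace ℝ (Fin n)))
    (hDclosed : ∀ i, IsClosed (D i)) (hDconv : ∀ i, Convex ℝ (D i))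
    (hDS : ∀ i, D i ⊆ S) (hAD : ∀ i, A i ⊆ D i)
    (hncA : (S \ ⋃ i, A i).Nonempty) (hncD : (S \ ⋃ i, D i).Nonempty)
    (v₀ v₁ : EuclideanSpace ℝ (Fin n)) (hv₀ : v₀ ∈ S) (hv₁ : v₁ ∈ S)
    (ε₀ ε₁ : ℝ) (hε₀ : 0 < ε₀) (hε₁ : 0 < ε₁)
    (hd₀ : ∀ i, Metric.infDist v₀ (A i) = ε₀)
    (hd₁ : ∀ i, Metric.infDist v₁ (D i) = ε₁) :
    ε₁ ≤ ε₀ :=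
  stmt_7_general n a ha S hS face hface A hAconv hfaceA D hAD v₀ v₁ hv₁ ε₀ ε₁ hε₀ hd₀ hd₁
end

section
/- Let S be an n-simplex with faces S^i, C^i closed convex subsets of S with S^i ⊆ C^i, and C^i_t = (1-t)S^i + tC^i. If for some t ∈ [0,1) the family {C^i_t : i} does not cover S, then there is a neighborhood W of t in [0,1] such that {C^i_{t'} : i} does not cover S for all t' ∈ W. -/
/-!
The set of parameters `t` for which a fixed point `x` lies in `(1 - t) • K + t • L` is the
projection to `ℝ` of a closed subset of `ℝ × (K × L)`; for compact `K` and `L` this projection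
is closed. Hence "`x` is not covered" is an open condition on `t`, and so is "`S` is not covered",
being a union of such conditions over `x ∈ S`.
-/

section MinkowskiCombination

variable {E : Type*} [AddCommGroup E] [Module ℝ E]

def minkowskiComb (K L : Set E) (t : ℝ) : Set E :=
  {x | ∃ s ∈ K, ∃ c ∈ L, x = (1 - t) • s + t • c}

variable [TopologicalSpace E] [ContinuousAdd E] [ContinuousSMul ℝ E] [T2Space E]

theorem isClosed_setOf_mem_minkowskiComb {K L : Set E} (hK : IsCompact K) (hL : IsCompact L)
    (x : E) : IsClosed {t : ℝ | x ∈ minkowskiComb K L t} := by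
  have := isCompact_iff_compactSpace.mp hK
  have := isCompact_iff_compactSpace.mp hL
  have hZ : IsClosed {p : ℝ × (K × L) | x = (1 - p.1) • (p.2.1 : E) + p.1 • (p.2.2 : E)} :=
    isClosed_eq continuous_const (by fun_prop)
  convert isClosedMap_fst_of_compactSpace _ hZ using 1
  ext t
  constructor
  · rintro ⟨s, hs, c, hc, rfl⟩
    exact ⟨(t, ⟨s, hs⟩, ⟨c, hc⟩), rfl, rfl⟩
  · rintro ⟨⟨t, ⟨s, hs⟩, ⟨c, hc⟩⟩, hx, rfl⟩
    exact ⟨s, hs, c, hc, hx⟩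

theorem isOpen_setOf_not_subset_iUnion_minkowskiComb {ι : Type*} [Finite ι] {K L : ι → Set E}
    (hK : ∀ i, IsCompact (K i)) (hL : ∀ i, IsCompact (L i)) (S : Set E) :
    IsOpen {t : ℝ | ¬ S ⊆ ⋃ i, minkowskiComb (K i) (L i) t} := by
  have hunion : {t : ℝ | ¬ S ⊆ ⋃ i, minkowskiComb (K i) (L i) t} =
      ⋃ x ∈ S, ⋂ i, {t | x ∈ minkowskiComb (K i) (L i) t}ᶜ := by
    ext t
    simp [Set.not_subset]
  rw [hunion]
  exact isOpen_biUnion fun x _ =>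
    isOpen_iInter_of_finite fun i => (isClosed_setOf_mem_minkowskiComb (hK i) (hL i) x).isOpen_compl

end MinkowskiCombination

theorem stmt_11_general (n : ℕ) (a : Fin (n + 1) → EuclideanSpace ℝ (Fin n))
    (S : Set (EuclideanSpace ℝ (Fin n))) (hS : S = convexHull ℝ (Set.range a))
    (face : Fin (n + 1) → Set (EuclideanSpace ℝ (Fin n)))
    (hface : ∀ i, face i = convexHull ℝ (a '' {j | j ≠ i}))
    (C : Fin (n + 1) → Set (EuclideanSpace ℝ (Fin n)))
    (hCclosed : ∀ i, IsClosed (C i))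
    (hCS : ∀ i, C i ⊆ S)
    (Ct : Fin (n + 1) → ℝ → Set (EuclideanSpace ℝ (Fin n)))
    (hCt : ∀ i t, Ct i t = {x | ∃ s ∈ face i, ∃ c ∈ C i, x = (1 - t) • s + t • c})
    (t : ℝ) (hnc : ¬ S ⊆ ⋃ i, Ct i t) :
    ∃ W ∈ nhdsWithin t (Set.Icc (0 : ℝ) 1), ∀ t' ∈ W, ¬ S ⊆ ⋃ i, Ct i t' := by
  have hSc : IsCompact S := hS ▸ (Set.finite_range a).isCompact_convexHull ℝ
  have hfacec (i) : IsCompact (face i) :=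
    hface i ▸ ((Set.finite_range a).subset (Set.image_subset_range _ _)).isCompact_convexHull ℝ
  have hCc (i) : IsCompact (C i) := hSc.of_isClosed_subset (hCclosed i) (hCS i)
  obtain rfl : Ct = fun i => minkowskiComb (face i) (C i) := funext fun i => funext (hCt i)
  exact ⟨_, mem_nhdsWithin_of_mem_nhds
    ((isOpen_setOf_not_subset_iUnion_minkowskiComb hfacec hCc S).mem_nhds hnc), fun _ h => h⟩

theorem stmt_11 (n : ℕ) (a : Fin (n + 1) → EuclideanSpace ℝ (Fin n))
    (ha : AffineIndependent ℝ a)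
    (S : Set (EuclideanSpace ℝ (Fin n))) (hS : S = convexHull ℝ (Set.range a))
    (face : Fin (n + 1) → Set (EuclideanSpace ℝ (Fin n)))
    (hface : ∀ i, face i = convexHull ℝ (a '' {j | j ≠ i}))
    (C : Fin (n + 1) → Set (EuclideanSpace ℝ (Fin n)))
    (hCclosed : ∀ i, IsClosed (C i)) (hCconv : ∀ i, Convex ℝ (C i))
    (hCS : ∀ i, C i ⊆ S) (hfaceC : ∀ i, face i ⊆ C i)
    (Ct : Fin (n + 1) → ℝ → Set (EuclideanSpace ℝ (Fin n)))
    (hCt : ∀ i t, Ct i t = {x | ∃ s ∈ face i, ∃ c ∈ C i, x = (1 - t) • s + t • c})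
    (t : ℝ) (ht : t ∈ Set.Ico (0 : ℝ) 1) (hnc : ¬ S ⊆ ⋃ i, Ct i t) :
    ∃ W ∈ nhdsWithin t (Set.Icc (0 : ℝ) 1), ∀ t' ∈ W, ¬ S ⊆ ⋃ i, Ct i t' :=
  stmt_11_general n a S hS face hface C hCclosed hCS Ct hCt t hnc
end

section
/- Let S be an n-simplex in R^n with faces S^i, and C^1,...,C^{n+1} closed convex subsets of S with S^i ⊆ C^i that cover S. Then the intersection ∩_i C^i is nonempty. (Convex KKM/Sperner-type theorem.) -/
/-!
Induction on the number of vertices. Let `a_L` be the last vertex and `T` the part of the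
simplex lying in every `C_j` with `j ≠ L`; it is compact, convex and contains `a_L`, while `C_L`
contains all the other vertices. If `T` missed `C_L`, a hyperplane `f = u` would strictly separate
them. Cutting every edge `[a_L, a_j]` by this hyperplane gives points `p_j` whose hull lies in the
simplex and in the hyperplane, hence outside `C_L`; so it is covered by the `C_j` with `j ≠ L`,
which contain the matching vertices. By induction these `C_j` meet on the hull of the `p_j`,
i.e. at a point of `T` on the hyperplane, which is impossible.
-/

open Set

variable {E : Type*} [AddCommGroup E] [Module ℝ E] [TopologicalSpace E]
  [IsTopologicalAddGroup E] [ContinuousSMul ℝ E]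

lemma exists_mem_segment_eq_of_le_of_le {f : E → ℝ} (hf : Continuous f) {x y : E} {c : ℝ}
    (hx : f x ≤ c) (hy : c ≤ f y) : ∃ z ∈ segment ℝ x y, f z = c :=
  (convex_segment x y).isPreconnected.intermediate_value (left_mem_segment ℝ x y)
    (right_mem_segment ℝ x y) hf.continuousOn ⟨hx, hy⟩

theorem convex_kkm [LocallyConvexSpace ℝ E] {m : ℕ} (a : Fin (m + 1) → E)
    (C : Fin (m + 1) → Set E) (hclosed : ∀ i, IsClosed (C i)) (hconv : ∀ i, Convex ℝ (C i))
    (hvert : ∀ i j, j ≠ i → a j ∈ C i) (hcover : convexHull ℝ (range a) ⊆ ⋃ i, C i) :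
    (convexHull ℝ (range a) ∩ ⋂ i, C i).Nonempty := by
  induction m with
  | zero =>
    have ha : a 0 ∈ convexHull ℝ (range a) := subset_convexHull ℝ _ (mem_range_self 0)
    obtain ⟨i, hi⟩ := mem_iUnion.1 (hcover ha)
    exact ⟨a 0, ha, mem_iInter.2 fun j => Subsingleton.elim (α := Fin 1) i j ▸ hi⟩
  | succ m ih =>
    set S := convexHull ℝ (range a)
    set L := Fin.last (m + 1)
    set T := S ∩ ⋂ j : Fin (m + 1), C j.castSucc
    by_contra hempty
    have hdisj : Disjoint T (C L) := disjoint_left.2 fun x ⟨hxS, hxC⟩ hxL =>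
      hempty ⟨x, hxS, mem_iInter.2 (Fin.lastCases hxL (mem_iInter.1 hxC))⟩
    have hT : IsCompact T := ((finite_range a).isCompact_convexHull (𝕜 := ℝ)).inter_right
      (isClosed_iInter fun j => hclosed _)
    obtain ⟨f, u, v, hfT, huv, hfC⟩ := geometric_hahn_banach_compact_closed
      ((convex_convexHull ℝ _).inter (convex_iInter fun j => hconv _)) hT (hconv L) (hclosed L)
      hdisj
    have haS : ∀ i, a i ∈ S := fun i => subset_convexHull ℝ _ (mem_range_self i)
    have haL : a L ∈ T :=
      ⟨haS L, mem_iInter.2 fun j => hvert _ _ (Fin.castSucc_lt_last j).ne'⟩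
    have hfa : ∀ j : Fin (m + 1), u < f (a j.castSucc) := fun j =>
      huv.trans (hfC _ (hvert L _ (Fin.castSucc_lt_last j).ne))
    choose p hpseg hfp using fun j =>
      exists_mem_segment_eq_of_le_of_le f.continuous (hfT _ haL).le (hfa j).le
    have hpS : convexHull ℝ (range p) ⊆ S :=
      convexHull_min (range_subset_iff.2 fun j =>
        (convex_convexHull ℝ _).segment_subset (haS _) (haS _) (hpseg j))
        (convex_convexHull ℝ _)
    have hpf : convexHull ℝ (range p) ⊆ {x | f x = u} := convexHull_min
      (range_subset_iff.2 hfp) (convex_hyperplane f.isLinear u)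
    have hpvert : ∀ j k : Fin (m + 1), k ≠ j → p k ∈ C j.castSucc := fun j k hkj =>
      (hconv _).segment_subset (hvert _ _ (Fin.castSucc_lt_last j).ne')
        (hvert _ _ (Fin.castSucc_injective _ |>.ne hkj)) (hpseg k)
    have hpcover : convexHull ℝ (range p) ⊆ ⋃ j : Fin (m + 1), C j.castSucc := fun x hx => by
      obtain ⟨i, hi⟩ := mem_iUnion.1 (hcover (hpS hx))
      induction i using Fin.lastCases with
      | last => exact absurd (hpf hx) (huv.trans (hfC x hi)).ne'
      | cast j => exact mem_iUnion.2 ⟨j, hi⟩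
    obtain ⟨y, hyp, hyC⟩ :=
      ih p (fun j => C j.castSucc) (fun j => hclosed _) (fun j => hconv _) hpvert hpcover
    exact (hfT y ⟨hpS hyp, hyC⟩).ne (hpf hyp)

theorem stmt_12_general (n : ℕ) (a : Fin (n + 1) → EuclideanSpace ℝ (Fin n))
    (S : Set (EuclideanSpace ℝ (Fin n))) (hS : S = convexHull ℝ (Set.range a))
    (face : Fin (n + 1) → Set (EuclideanSpace ℝ (Fin n)))
    (hface : ∀ i, face i = convexHull ℝ (a '' {j | j ≠ i}))
    (C : Fin (n + 1) → Set (EuclideanSpace ℝ (Fin n)))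
    (hCclosed : ∀ i, IsClosed (C i)) (hCconv : ∀ i, Convex ℝ (C i))
    (hfaceC : ∀ i, face i ⊆ C i)
    (hcover : S ⊆ ⋃ i, C i) :
    (⋂ i, C i).Nonempty := by
  subst hS
  have hvert : ∀ i j, j ≠ i → a j ∈ C i := fun i j hji =>
    hfaceC i (hface i ▸ subset_convexHull ℝ _ ⟨j, hji, rfl⟩)
  exact (convex_kkm a C hCclosed hCconv hvert hcover).mono inter_subset_right

theorem stmt_12 (n : ℕ) (a : Fin (n + 1) → EuclideanSpace ℝ (Fin n))
    (ha : AffineIndependent ℝ a)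
    (S : Set (EuclideanSpace ℝ (Fin n))) (hS : S = convexHull ℝ (Set.range a))
    (face : Fin (n + 1) → Set (EuclideanSpace ℝ (Fin n)))
    (hface : ∀ i, face i = convexHull ℝ (a '' {j | j ≠ i}))
    (C : Fin (n + 1) → Set (EuclideanSpace ℝ (Fin n)))
    (hCclosed : ∀ i, IsClosed (C i)) (hCconv : ∀ i, Convex ℝ (C i))
    (hCS : ∀ i, C i ⊆ S) (hfaceC : ∀ i, face i ⊆ C i)
    (hcover : S ⊆ ⋃ i, C i) :
    (⋂ i, C i).Nonempty :=
  stmt_12_general n a S hS face hface C hCclosed hCconv hfaceC hcover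
end

section
/- Let S be an n-simplex with faces S^i. Let {B^α : α ∈ I} be a family of closed convex subsets of S, with |I| ≥ n+2, such that each B^α contains some face S^i and every face S^i is contained in some B^α. If every subfamily of n+2 members possesses a common equally spaced point in S at positive distance, then the whole family possesses a point in S equidistant at a positive common distance from all B^α. -/
/-!
Equally spaced points are unique. Let `C i` be convex sets containing the faces `F i` of the
simplex, and let `v ≠ v'` in the simplex be equally spaced from all `C i`, at distances `ε > 0`
and `ε'`. Extend the segment from `v` through `v'` until it leaves the simplex at a point `w` of
some face `F j`. Then `v'` lies on `[w, v)`, and since `x ↦ infDist x (C j)` is convex and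
vanishes at `w`, we get `ε' < ε`; by symmetry also `ε < ε'`, which is absurd.

Given the family `B`, choose for every face `i` a member `B (g i) ⊇ F i`. For each `α`, the at
most `n + 2` sets `B α` and `B (g i)` lie in a subfamily of exactly `n + 2` members, so they have
an equally spaced point; by uniqueness it does not depend on `α`.
-/

open Set AffineMap Metric

theorem Convex.infDist_lineMap_le {E : Type*} [NormedAddCommGroup E] [NormedSpace ℝ E]
    {C : Set E} (hC : Convex ℝ C) {w : E} (hw : w ∈ C) (x : E) {r : ℝ} (hr : r ∈ Icc 0 1) :
    infDist (lineMap w x r) C ≤ r * infDist x C := by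
  have : Nonempty C := ⟨⟨w, hw⟩⟩
  rw [infDist_eq_iInf (x := x), Real.mul_iInf_of_nonneg hr.1]
  refine le_ciInf fun ⟨p, hp⟩ => ?_
  have hsub : lineMap w x r - lineMap w p r = r • (x - p) := by
    simp only [lineMap_apply_module']; module
  calc infDist (lineMap w x r) C ≤ dist (lineMap w x r) (lineMap w p r) :=
        infDist_le_dist_of_mem (hC.lineMap_mem hw hp hr)
    _ = r * dist x p := by
        rw [dist_eq_norm, hsub, norm_smul, Real.norm_of_nonneg hr.1, dist_eq_norm]

theorem exists_lineMap_nonneg_eq_zero {ι : Type*} [Fintype ι] {x y : ι → ℝ}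
    (hx : ∀ i, 0 ≤ x i) (hy : ∀ i, 0 ≤ y i) (hsum : ∑ i, x i = ∑ i, y i) (hne : x ≠ y) :
    ∃ t : ℝ, 1 ≤ t ∧ (∀ i, 0 ≤ lineMap (x i) (y i) t) ∧
      ∃ j, lineMap (x j) (y j) t = 0 := by
  classical
  simp only [lineMap_apply_ring']
  have hdec : ∃ i, y i < x i := by
    by_contra! h
    exact hne (funext fun i =>
      (Finset.sum_eq_sum_iff_of_le fun i _ => h i).1 hsum i (Finset.mem_univ i))
  obtain ⟨j, hj, hmin⟩ := ({i | y i < x i} : Finset ι).exists_min_image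
    (fun i => x i / (x i - y i)) (by simpa [Finset.filter_nonempty_iff] using hdec)
  simp only [Finset.mem_filter, Finset.mem_univ, true_and] at hj hmin
  have hd : 0 < x j - y j := sub_pos.2 hj
  refine ⟨x j / (x j - y j), ?_, fun i => ?_, j, ?_⟩
  · rw [one_le_div hd]; linarith [hy j]
  · rcases lt_or_ge (y i) (x i) with hi | hi
    · have := (le_div_iff₀ (sub_pos.2 hi)).1 (hmin i hi)
      linarith
    · nlinarith [hx i, div_nonneg (hx j) hd.le]
  · field_simp; ring

theorem Finset.exists_injective_fin_subset_range {ι : Type*} {m : ℕ} (s : Finset ι)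
    (hs : s.card ≤ m) (h : ∃ f : Fin m → ι, Function.Injective f) :
    ∃ f : Fin m → ι, Function.Injective f ∧ ↑s ⊆ Set.range f := by
  classical
  obtain ⟨f₀, hf₀⟩ := h
  have hm : m ≤ (s ∪ univ.image f₀).card := by
    calc m = (univ.image f₀).card := by
          rw [card_image_of_injective _ hf₀, card_univ, Fintype.card_fin]
      _ ≤ _ := card_le_card subset_union_right
  obtain ⟨u, hsu, -, hu⟩ := exists_subsuperset_card_eq subset_union_left hs hm
  let e := u.equivFinOfCardEq hu
  exact ⟨(↑) ∘ e.symm, Subtype.val_injective.comp e.symm.injective,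
    fun x hx => ⟨e ⟨x, hsu hx⟩, by simp⟩⟩

namespace AffineBasis

variable {ι : Type*} [Fintype ι]

theorem mem_convexHull_image_of_coord_eq_zero {E : Type*} [AddCommGroup E] [Module ℝ E]
    (b : AffineBasis ι ℝ E) (s : Set ι) {x : E} (hx : ∀ i, 0 ≤ b.coord i x)
    (hxs : ∀ i ∉ s, b.coord i x = 0) : x ∈ convexHull ℝ (b '' s) := by
  classical
  have hsum : ∑ i, b.coord i x = 1 := b.sum_coord_apply_eq_one x
  have hx_eq : x = ({i | b.coord i x ≠ 0} : Finset ι).centerMass (b.coord · x) b := by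
    rw [Finset.centerMass_filter_ne_zero, ← affineCombination_eq_centerMass hsum,
      b.affineCombination_coord_eq_self]
  rw [hx_eq]
  refine Finset.centerMass_mem_convexHull _ (fun i _ => hx i) ?_ fun i hi => mem_image_of_mem b ?_
  · rw [Finset.sum_filter_ne_zero, hsum]; exact one_pos
  · by_contra his
    exact (Finset.mem_filter.1 hi).2 (hxs i his)

theorem exists_lineMap_eq_of_nonneg_coord {V P : Type*} [AddCommGroup V] [Module ℝ V]
    [AddTorsor V P] (b : AffineBasis ι ℝ P) {v v' : P} (hv : ∀ i, 0 ≤ b.coord i v)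
    (hv' : ∀ i, 0 ≤ b.coord i v') (hne : v ≠ v') :
    ∃ w, (∀ i, 0 ≤ b.coord i w) ∧ (∃ j, b.coord j w = 0) ∧
      ∃ r ∈ Ico (0 : ℝ) 1, lineMap w v r = v' := by
  have hcoord_ne : (b.coord · v) ≠ (b.coord · v') := fun h =>
    hne (b.ext_elem fun i => congrFun h i)
  obtain ⟨t, ht, hnonneg, j, hj⟩ := exists_lineMap_nonneg_eq_zero hv hv'
    (by simp only [sum_coord_apply_eq_one]) hcoord_ne
  have hcoord_w : ∀ i, b.coord i (lineMap v v' t) = lineMap (b.coord i v) (b.coord i v') t :=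
    fun i => (b.coord i).apply_lineMap v v' t
  have ht₀ : 0 < t := one_pos.trans_le ht
  refine ⟨lineMap v v' t, fun i => (hcoord_w i).symm ▸ hnonneg i, ⟨j, (hcoord_w j).trans hj⟩,
    1 - t⁻¹, ⟨sub_nonneg.2 (inv_le_one_of_one_le₀ ht), sub_lt_self _ (inv_pos.2 ht₀)⟩,
    b.ext_elem fun i => ?_⟩
  rw [(b.coord i).apply_lineMap, hcoord_w, lineMap_apply_ring', lineMap_apply_ring']
  field_simp
  ring

variable {E : Type*} [NormedAddCommGroup E] [NormedSpace ℝ E] (b : AffineBasis ι ℝ E)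
  {C : ι → Set E} {v v' : E} {ε ε' : ℝ}

theorem infDist_lt_of_ne (hC : ∀ i, Convex ℝ (C i))
    (hface : ∀ i x, (∀ j, 0 ≤ b.coord j x) → b.coord i x = 0 → x ∈ C i)
    (hv : ∀ i, 0 ≤ b.coord i v) (hv' : ∀ i, 0 ≤ b.coord i v') (hne : v ≠ v') (hε : 0 < ε)
    (hvε : ∀ i, infDist v (C i) = ε) (hv'ε' : ∀ i, infDist v' (C i) = ε') : ε' < ε := by
  obtain ⟨w, hw, ⟨j, hwj⟩, r, hr, rfl⟩ := b.exists_lineMap_eq_of_nonneg_coord hv hv' hne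
  calc ε' = infDist (lineMap w v r) (C j) := (hv'ε' j).symm
    _ ≤ r * infDist v (C j) :=
        (hC j).infDist_lineMap_le (hface j w hw hwj) v ⟨hr.1, hr.2.le⟩
    _ = r * ε := by rw [hvε]
    _ < ε := mul_lt_of_lt_one_left hε hr.2

theorem eq_of_infDist_eq (hC : ∀ i, Convex ℝ (C i))
    (hface : ∀ i x, (∀ j, 0 ≤ b.coord j x) → b.coord i x = 0 → x ∈ C i)
    (hv : ∀ i, 0 ≤ b.coord i v) (hv' : ∀ i, 0 ≤ b.coord i v') (hε : 0 < ε) (hε' : 0 < ε')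
    (hvε : ∀ i, infDist v (C i) = ε) (hv'ε' : ∀ i, infDist v' (C i) = ε') : v = v' := by
  by_contra hne
  have := b.infDist_lt_of_ne hC hface hv hv' hne hε hvε hv'ε'
  have := b.infDist_lt_of_ne hC hface hv' hv (Ne.symm hne) hε' hv'ε' hvε
  linarith

end AffineBasis

theorem stmt_13_general (n : ℕ) (a : Fin (n + 1) → EuclideanSpace ℝ (Fin n))
    (ha : AffineIndependent ℝ a)
    (S : Set (EuclideanSpace ℝ (Fin n))) (hS : S = convexHull ℝ (Set.range a))
    (face : Fin (n + 1) → Set (EuclideanSpace ℝ (Fin n)))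
    (hface : ∀ i, face i = convexHull ℝ (a '' {j | j ≠ i}))
    {ι : Type*} (B : ι → Set (EuclideanSpace ℝ (Fin n)))
    (hBconv : ∀ α, Convex ℝ (B α))
    (hfaceB : ∀ i, ∃ α, face i ⊆ B α)
    (hcard : ∃ f : Fin (n + 2) → ι, Function.Injective f)
    (hsub : ∀ f : Fin (n + 2) → ι, Function.Injective f →
      ∃ v ∈ S, ∃ ε : ℝ, 0 < ε ∧ ∀ k, Metric.infDist v (B (f k)) = ε) :
    ∃ v ∈ S, ∃ ε : ℝ, 0 < ε ∧ ∀ α, Metric.infDist v (B α) = ε := by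
  classical
  let b : AffineBasis (Fin (n + 1)) ℝ (EuclideanSpace ℝ (Fin n)) :=
    ⟨a, ha, ha.affineSpan_eq_top_iff_card_eq_finrank_add_one.2 (by simp)⟩
  have hS_coord : ∀ x, x ∈ S ↔ ∀ i, 0 ≤ b.coord i x := fun x => by
    rw [hS, show a = b from rfl, b.convexHull_eq_nonneg_coord]; rfl
  choose g hg using hfaceB
  have hface_g : ∀ i x, (∀ j, 0 ≤ b.coord j x) → b.coord i x = 0 → x ∈ B (g i) :=
    fun i x hx hxi => hg i <| (hface i).symm ▸
      b.mem_convexHull_image_of_coord_eq_zero _ hx fun j hj => (not_not.1 hj) ▸ hxi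
  have hspaced : ∀ α, ∃ v ∈ S, ∃ ε : ℝ, 0 < ε ∧
      (∀ i, infDist v (B (g i)) = ε) ∧ infDist v (B α) = ε := by
    intro α
    let T : Finset ι := insert α (Finset.univ.image g)
    have hT : T.card ≤ n + 2 := (Finset.card_insert_le _ _).trans
      (by simpa using Finset.card_image_le (s := Finset.univ) (f := g))
    obtain ⟨f, hf, hTf⟩ := T.exists_injective_fin_subset_range hT hcard
    obtain ⟨v, hvS, ε, hε, hvε⟩ := hsub f hf
    have hmem : ∀ β ∈ T, infDist v (B β) = ε := fun β hβ => by
      obtain ⟨k, rfl⟩ := hTf hβ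
      exact hvε k
    exact ⟨v, hvS, ε, hε, fun i => hmem _ (by simp [T]), hmem _ (Finset.mem_insert_self _ _)⟩
  obtain ⟨v, hvS, ε, hε, hvε, -⟩ := hspaced (g 0)
  refine ⟨v, hvS, ε, hε, fun α => ?_⟩
  obtain ⟨v', hv'S, ε', hε', hv'ε', hv'α⟩ := hspaced α
  obtain rfl := b.eq_of_infDist_eq (fun i => hBconv (g i)) hface_g ((hS_coord v).1 hvS)
    ((hS_coord v').1 hv'S) hε hε' hvε hv'ε'
  rwa [← hv'ε' 0, hvε 0] at hv'α

theorem stmt_13 (n : ℕ) (a : Fin (n + 1) → EuclideanSpace ℝ (Fin n))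
    (ha : AffineIndependent ℝ a)
    (S : Set (EuclideanSpace ℝ (Fin n))) (hS : S = convexHull ℝ (Set.range a))
    (face : Fin (n + 1) → Set (EuclideanSpace ℝ (Fin n)))
    (hface : ∀ i, face i = convexHull ℝ (a '' {j | j ≠ i}))
    {ι : Type*} (B : ι → Set (EuclideanSpace ℝ (Fin n)))
    (hBclosed : ∀ α, IsClosed (B α)) (hBconv : ∀ α, Convex ℝ (B α))
    (hBS : ∀ α, B α ⊆ S)
    (hBface : ∀ α, ∃ i, face i ⊆ B α)
    (hfaceB : ∀ i, ∃ α, face i ⊆ B α)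
    (hcard : ∃ f : Fin (n + 2) → ι, Function.Injective f)
    (hsub : ∀ f : Fin (n + 2) → ι, Function.Injective f →
      ∃ v ∈ S, ∃ ε : ℝ, 0 < ε ∧ ∀ k, Metric.infDist v (B (f k)) = ε) :
    ∃ v ∈ S, ∃ ε : ℝ, 0 < ε ∧ ∀ α, Metric.infDist v (B α) = ε :=
  stmt_13_general n a ha S hS face hface B hBconv hfaceB hcard hsub
end
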